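/- arXiv:2309.05954 — 3 statements merged into one kernel-verified Lean document; each statement's English description precedes it below -/
import Mathlib

section
/- Let (V,E,Ψ) be a strongly connected planar box-like self-affine GIFS in which every T_e is diagonal, with positive weights (p_e) and graph-directed measure family (μ_v)_{v∈V}. Then for every q≥0, either max{γ_A(q),γ_B(q)} ≤ t(q) or min{γ_A(q),γ_B(q)} ≥ t(q). -/
open MeasureTheory Filter Set
open scoped Classical

noncomputable section

namespace LqGIFS

/-! ### Mesh cubes, moment sums, L^q spectra, box dimension -/

/-- Closed cube of the `δ`-mesh of `ℝ`. -/
def meshCube1 (δ : ℝ) (k : ℤ) : Set ℝ := Set.Icc ((k : ℝ) * δ) (((k : ℝ) + 1) * δ)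

/-- Closed cube of the `δ`-mesh of `ℝ²`. -/
def meshCube2 (δ : ℝ) (k : ℤ × ℤ) : Set (ℝ × ℝ) :=
  (Set.Icc ((k.1 : ℝ) * δ) (((k.1 : ℝ) + 1) * δ)) ×ˢ
    (Set.Icc ((k.2 : ℝ) * δ) (((k.2 : ℝ) + 1) * δ))

/-- The moment sum `D_δ^q(ν)` for a measure on `ℝ` (cubes of zero measure are omitted,
so that at `q = 0` this counts the mesh cubes of positive measure). -/
def Dq1 (ν : Measure ℝ) (δ q : ℝ) : ℝ :=
  ∑' k : ℤ, if ν (meshCube1 δ k) = 0 then 0 else (ν (meshCube1 δ k)).toReal ^ q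

/-- The moment sum `D_δ^q(ν)` for a measure on `ℝ²`. -/
def Dq2 (ν : Measure (ℝ × ℝ)) (δ q : ℝ) : ℝ :=
  ∑' k : ℤ × ℤ, if ν (meshCube2 δ k) = 0 then 0 else (ν (meshCube2 δ k)).toReal ^ q

/-- The `L^q`-spectrum of a measure on `ℝ` exists and equals `s` (i.e. upper and lower
`L^q`-spectra coincide and equal `s`). -/
def HasLq1 (ν : Measure ℝ) (q s : ℝ) : Prop :=
  Tendsto (fun δ : ℝ => Real.log (Dq1 ν δ q) / (-Real.log δ))
    (nhdsWithin 0 (Set.Ioi 0)) (nhds s)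

/-- The `L^q`-spectrum of a measure on `ℝ²` exists and equals `s`. -/
def HasLq2 (ν : Measure (ℝ × ℝ)) (q s : ℝ) : Prop :=
  Tendsto (fun δ : ℝ => Real.log (Dq2 ν δ q) / (-Real.log δ))
    (nhdsWithin 0 (Set.Ioi 0)) (nhds s)

/-- Number of closed `δ`-mesh cubes of `ℝ²` meeting `X`. -/
def boxCount (X : Set (ℝ × ℝ)) (δ : ℝ) : ℕ :=
  Set.ncard {k : ℤ × ℤ | (X ∩ meshCube2 δ k).Nonempty}

/-- The box dimension of `X` exists and equals `d`. -/
def HasBoxDim (X : Set (ℝ × ℝ)) (d : ℝ) : Prop :=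
  Tendsto (fun δ : ℝ => Real.log (boxCount X δ) / (-Real.log δ))
    (nhdsWithin 0 (Set.Ioi 0)) (nhds d)

/-! ### Matrices: 1-norm, spectral radius, permutation matrices -/

/-- The 1-norm `‖A‖ = ∑_{i,j} |a_{ij}|` of a square matrix. -/
def mnorm {ι : Type*} [Fintype ι] (A : Matrix ι ι ℝ) : ℝ := ∑ i, ∑ j, |A i j|

/-- The spectral radius of a square real matrix, via the Gelfand formula. -/
def specRad {ι : Type*} [Fintype ι] [DecidableEq ι] (A : Matrix ι ι ℝ) : ℝ :=
  Filter.limsup (fun k : ℕ => (mnorm (A ^ k)) ^ ((k : ℝ)⁻¹)) Filter.atTop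

/-- A square 0-1 matrix with exactly one 1 in each row and each column. -/
def IsPermMatrix {ι : Type*} (Z : Matrix ι ι ℝ) : Prop :=
  (∀ i j, Z i j = 0 ∨ Z i j = 1) ∧ (∀ i, ∃! j, Z i j = 1) ∧ (∀ j, ∃! i, Z i j = 1)

/-! ### Directed graphs -/

/-- Strong connectivity of the finite directed graph with edge set `E`,
initial vertex map `ini` and terminal vertex map `ter`. -/
def GraphSC {V E : Type*} (ini ter : E → V) : Prop :=
  ∀ v v' : V, Relation.TransGen (fun u u' : V => ∃ e, ini e = u ∧ ter e = u') v v'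

/-- The matrix `F^{(q)}_{x,y}` with entry `p_{e'}^q a_{e'}^x b_{e'}^y` at `(e,e')` when
`t(e) = i(e')`, and `0` otherwise. -/
def FmatG {V E : Type*} (ini ter : E → V) (p a b : E → ℝ) (q x y : ℝ) :
    Matrix E E ℝ :=
  fun e e' => if ter e = ini e' then p e' ^ q * a e' ^ x * b e' ^ y else 0

/-- `f` is the entrywise product of the normalized left and right Perron vectors of the
irreducible matrix `F^{(q)}_{x,y(x)}` (spectral radius 1). -/
def IsPerronData {V E : Type*} [Fintype E] [DecidableEq E] (ini ter : E → V)
    (p a b : E → ℝ) (q x yx : ℝ) (f : E → ℝ) : Prop :=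
  specRad (FmatG ini ter p a b q x yx) = 1 ∧
  ∃ u v : E → ℝ, (∀ e, 0 < u e) ∧ (∀ e, 0 < v e) ∧ (∑ e, u e) = 1 ∧
    (FmatG ini ter p a b q x yx).mulVec u = u ∧
    (FmatG ini ter p a b q x yx).vecMul v = v ∧
    (∑ e, v e * u e) = 1 ∧ (∀ e, f e = v e * u e)

/-! ### Planar box-like graph-directed self-affine systems -/

/-- A planar box-like self-affine GIFS: a finite directed graph together with, for each
edge `e`, a contraction `ψ_e(z) = T_e z + t_e` whose linear part is the diagonal matrix
`diag(±a_e, ±b_e)` (when `diag e = true`) or the anti-diagonal matrix with entries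
`±a_e` (top right) and `±b_e` (bottom left) (when `diag e = false`), `0 < a_e, b_e < 1`. -/
structure BoxLikeGIFS (V E : Type*) where
  init : E → V
  term : E → V
  a : E → ℝ
  b : E → ℝ
  sa : E → ℝ
  sb : E → ℝ
  diag : E → Bool
  trans : E → ℝ × ℝ
  a_mem : ∀ e, a e ∈ Set.Ioo (0 : ℝ) 1
  b_mem : ∀ e, b e ∈ Set.Ioo (0 : ℝ) 1
  sa_mem : ∀ e, sa e = 1 ∨ sa e = -1
  sb_mem : ∀ e, sb e = 1 ∨ sb e = -1
  edge_exists : ∀ v, ∃ e, init e = v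

namespace BoxLikeGIFS

variable {V E : Type*}

/-- The contraction `ψ_e`. -/
def map (S : BoxLikeGIFS V E) (e : E) : ℝ × ℝ → ℝ × ℝ := fun z =>
  if S.diag e then
    (S.sa e * S.a e * z.1 + (S.trans e).1, S.sb e * S.b e * z.2 + (S.trans e).2)
  else
    (S.sa e * S.a e * z.2 + (S.trans e).1, S.sb e * S.b e * z.1 + (S.trans e).2)

def StronglyConnected (S : BoxLikeGIFS V E) : Prop := GraphSC S.init S.term

/-- The open unit square `(0,1)²`. -/
def unitSq : Set (ℝ × ℝ) := Set.Ioo (0 : ℝ) 1 ×ˢ Set.Ioo (0 : ℝ) 1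

/-- The rectangular open set condition. -/
def ROSC (S : BoxLikeGIFS V E) : Prop :=
  (∀ e : E, S.map e '' unitSq ⊆ unitSq) ∧
  ∀ e e' : E, e ≠ e' → S.init e = S.init e' →
    Disjoint (S.map e '' unitSq) (S.map e' '' unitSq)

/-- Positive weights summing to one at each vertex. -/
def IsWeights [Fintype E] (S : BoxLikeGIFS V E) (p : E → ℝ) : Prop :=
  (∀ e, 0 < p e) ∧ ∀ v : V, (∑ e : E, if S.init e = v then p e else 0) = 1

/-- `μ` is the associated graph-directed box-like self-affine measure family. -/
def IsGDMeasure [Fintype E] (S : BoxLikeGIFS V E) (p : E → ℝ)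
    (μ : V → Measure (ℝ × ℝ)) : Prop :=
  (∀ v, IsProbabilityMeasure (μ v)) ∧
  ∀ v : V, μ v =
    ∑ e : E, if S.init e = v then
      ENNReal.ofReal (p e) • ((μ (S.term e)).map (S.map e)) else (0 : Measure (ℝ × ℝ))

/-- `X` is the associated graph-directed self-affine carpet family. -/
def IsGDAttractor (S : BoxLikeGIFS V E) (X : V → Set (ℝ × ℝ)) : Prop :=
  (∀ v, (X v).Nonempty ∧ IsCompact (X v)) ∧
  ∀ v : V, X v = ⋃ e : E, ⋃ _ : S.init e = v, S.map e '' X (S.term e)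

/-- The matrix `F^{(q)}_{x,y}` of the system. -/
def Fmat (S : BoxLikeGIFS V E) (p : E → ℝ) (q x y : ℝ) : Matrix E E ℝ :=
  FmatG S.init S.term p S.a S.b q x y

/-- The `(2#E) × (2#E)` block matrix `𝒢^{(q)}_{x,y}`, indexed by `E × Bool`
(`false` = first index of the block, `true` = second). -/
def Gmat (S : BoxLikeGIFS V E) (p : E → ℝ) (τx τy : V → ℝ) (q x y : ℝ) :
    Matrix (E × Bool) (E × Bool) ℝ := fun i j =>
  if S.term i.1 = S.init j.1 then
    if S.diag j.1 then
      if i.2 = false ∧ j.2 = false then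
        p j.1 ^ q * S.a j.1 ^ (x + τx (S.term j.1)) * S.b j.1 ^ (y - τx (S.term j.1))
      else if i.2 = true ∧ j.2 = true then
        p j.1 ^ q * S.b j.1 ^ (x + τy (S.term j.1)) * S.a j.1 ^ (y - τy (S.term j.1))
      else 0
    else
      if i.2 = false ∧ j.2 = true then
        p j.1 ^ q * S.a j.1 ^ (x + τy (S.term j.1)) * S.b j.1 ^ (y - τy (S.term j.1))
      else if i.2 = true ∧ j.2 = false then
        p j.1 ^ q * S.b j.1 ^ (x + τx (S.term j.1)) * S.a j.1 ^ (y - τx (S.term j.1))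
      else 0
  else 0

/-! ### Words -/

/-- An admissible word: consecutive edges are composable. -/
def Admissible (S : BoxLikeGIFS V E) (w : List E) : Prop :=
  List.Chain' (fun e e' => S.term e = S.init e') w

/-- `(c_w, d_w)`: width and height of the rectangle `ψ_w([0,1]²)`. -/
def wdims (S : BoxLikeGIFS V E) : List E → ℝ × ℝ
  | [] => (1, 1)
  | e :: w =>
      if S.diag e then (S.a e * (wdims S w).1, S.b e * (wdims S w).2)
      else (S.a e * (wdims S w).2, S.b e * (wdims S w).1)

/-- Whether `T_w` is diagonal (`true`) or anti-diagonal (`false`). -/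
def wordDiag (S : BoxLikeGIFS V E) : List E → Bool
  | [] => true
  | e :: w => S.diag e == wordDiag S w

/-- The larger singular value `α₁(w) = max(c_w, d_w)` of `T_w`. -/
def alpha1 (S : BoxLikeGIFS V E) (w : List E) : ℝ := max (S.wdims w).1 (S.wdims w).2

/-- The smaller singular value `α₂(w) = min(c_w, d_w)` of `T_w`. -/
def alpha2 (S : BoxLikeGIFS V E) (w : List E) : ℝ := min (S.wdims w).1 (S.wdims w).2

/-- Initial vertex of a (nonempty) word. -/
def wordInit [Nonempty V] (S : BoxLikeGIFS V E) (w : List E) : V :=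
  (w.head?.map S.init).getD (Classical.arbitrary V)

/-- Terminal vertex of a (nonempty) word. -/
def wordTerm [Nonempty V] (S : BoxLikeGIFS V E) (w : List E) : V :=
  (w.getLast?.map S.term).getD (Classical.arbitrary V)

/-- `p_w = p_{w_1} ⋯ p_{w_k}`. -/
def wordProb (p : E → ℝ) (w : List E) : ℝ := (w.map p).prod

/-- `τ_w(q)`: given the values `τx v`, `τy v` of the `L^q`-spectra of the two coordinate
projections of `μ_v`, this is the `L^q`-spectrum of the projection of `μ_{t(w)} ∘ ψ_w⁻¹`
onto the longest side of `ψ_w([0,1]²)`, i.e. `τx (t w)` if `π_w = π_x` and `τy (t w)`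
otherwise. -/
def wordTau [Nonempty V] (S : BoxLikeGIFS V E) (τx τy : V → ℝ) (w : List E) : ℝ :=
  if ((S.wdims w).2 ≤ (S.wdims w).1 ↔ S.wordDiag w = true) then τx (S.wordTerm w)
  else τy (S.wordTerm w)

/-- The modified singular value function
`φ^{s,q}(w) = p_w^q α₁(w)^{τ_w(q)} α₂(w)^{s - τ_w(q)}`. -/
def msvf [Nonempty V] (S : BoxLikeGIFS V E) (p : E → ℝ) (τx τy : V → ℝ)
    (s q : ℝ) (w : List E) : ℝ :=
  wordProb p w ^ q * S.alpha1 w ^ (S.wordTau τx τy w) *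
    S.alpha2 w ^ (s - S.wordTau τx τy w)

/-- The modified singular value function matrix `A_k^{s,q}`. -/
def Amat [Nonempty V] [Fintype E] (S : BoxLikeGIFS V E) (p : E → ℝ) (τx τy : V → ℝ)
    (s q : ℝ) (k : ℕ) : Matrix V V ℝ := fun v v' =>
  ∑ f : Fin k → E,
    if S.Admissible (List.ofFn f) ∧ S.wordInit (List.ofFn f) = v ∧
        S.wordTerm (List.ofFn f) = v'
    then S.msvf p τx τy s q (List.ofFn f) else 0

/-- The family `E^*_δ` of admissible words whose shortest side drops below `δ`
exactly at the last letter. -/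
def EstarDelta (S : BoxLikeGIFS V E) (δ : ℝ) : Set (List E) :=
  {w | w ≠ [] ∧ S.Admissible w ∧ S.alpha2 w < δ ∧ δ ≤ S.alpha2 w.dropLast}

end BoxLikeGIFS

/-! ### Partition of the projections, for the splitting proposition -/

/-- The projection family: `(v, false) ↦ μ_v^x` and `(v, true) ↦ μ_v^y`. -/
def projMeas {V : Type*} (μ : V → Measure (ℝ × ℝ)) (i : V × Bool) : Measure ℝ :=
  if i.2 then (μ i.1).map Prod.snd else (μ i.1).map Prod.fst

/-- `A`, `B` is a partition of the projection family `{μ_v^x, μ_v^y}_v` into two disjoint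
families of cardinality `#V`, on each of which the `L^q`-spectra exist and share a common
value, and which splits `{μ_v^x, μ_v^y}` for each `v`. -/
def GoodPartition {V : Type*} [Fintype V] (μ : V → Measure (ℝ × ℝ))
    (A B : Finset (V × Bool)) : Prop :=
  Disjoint A B ∧ A ∪ B = Finset.univ ∧
  A.card = Fintype.card V ∧ B.card = Fintype.card V ∧
  ∃ τA τB : ℝ → ℝ,
    (∀ q : ℝ, 0 ≤ q → ∀ i ∈ A, HasLq1 (projMeas μ i) q (τA q)) ∧
    (∀ q : ℝ, 0 ≤ q → ∀ i ∈ B, HasLq1 (projMeas μ i) q (τB q)) ∧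
    ∀ v : V, ((v, false) ∈ A ∧ (v, true) ∈ B) ∨ ((v, false) ∈ B ∧ (v, true) ∈ A)

end LqGIFS

end


noncomputable section
namespace LqGIFS
open Filter

variable {ι : Type*} [Fintype ι]

lemma mnorm_nonneg (A : Matrix ι ι ℝ) : 0 ≤ mnorm A :=
  Finset.sum_nonneg fun _ _ => Finset.sum_nonneg fun _ _ => abs_nonneg _

lemma mnorm_mono {A B : Matrix ι ι ℝ} (hA : ∀ i j, 0 ≤ A i j)
    (h : ∀ i j, A i j ≤ B i j) : mnorm A ≤ mnorm B := by
  refine Finset.sum_le_sum fun i _ => Finset.sum_le_sum fun j _ => ?_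
  rw [abs_of_nonneg (hA i j)]
  exact (h i j).trans (le_abs_self _)

lemma pow_entry_le [DecidableEq ι] {A B : Matrix ι ι ℝ} (hA : ∀ i j, 0 ≤ A i j)
    (hAB : ∀ i j, A i j ≤ B i j) (k : ℕ) :
    ∀ i j, 0 ≤ (A ^ k) i j ∧ (A ^ k) i j ≤ (B ^ k) i j := by
  induction k with
  | zero =>
    intro i j
    simp only [pow_zero, Matrix.one_apply]
    split <;> simp
  | succ k ih =>
    intro i j
    rw [pow_succ, pow_succ, Matrix.mul_apply, Matrix.mul_apply]
    constructor
    · exact Finset.sum_nonneg fun l _ => mul_nonneg (ih i l).1 (hA l j)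
    · refine Finset.sum_le_sum fun l _ => mul_le_mul (ih i l).2 (hAB l j) (hA l j) ?_
      exact le_trans (ih i l).1 (ih i l).2

lemma mnorm_mul_le (A B : Matrix ι ι ℝ) : mnorm (A * B) ≤ mnorm A * mnorm B := by
  have hrow : ∀ l : ι, ∑ j, |B l j| ≤ mnorm B := fun l =>
    Finset.single_le_sum (f := fun l => ∑ j, |B l j|)
      (fun _ _ => Finset.sum_nonneg fun _ _ => abs_nonneg _) (Finset.mem_univ l)
  calc mnorm (A * B) = ∑ i, ∑ j, |∑ l, A i l * B l j| := rfl
    _ ≤ ∑ i, ∑ j, ∑ l, |A i l| * |B l j| := by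
        refine Finset.sum_le_sum fun i _ => Finset.sum_le_sum fun j _ => ?_
        simpa [abs_mul] using Finset.abs_sum_le_sum_abs (fun l => A i l * B l j) Finset.univ
    _ = ∑ i, ∑ l, |A i l| * ∑ j, |B l j| := by
        refine Finset.sum_congr rfl fun i _ => ?_
        rw [Finset.sum_comm]
        simp [Finset.mul_sum]
    _ ≤ ∑ i, ∑ l, |A i l| * mnorm B := by
        refine Finset.sum_le_sum fun i _ => Finset.sum_le_sum fun l _ => ?_
        exact mul_le_mul_of_nonneg_left (hrow l) (abs_nonneg _)
    _ = mnorm A * mnorm B := by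
        simp only [mnorm]
        rw [Finset.sum_mul]
        exact Finset.sum_congr rfl fun i _ => (Finset.sum_mul _ _ _).symm

lemma mnorm_pow_le (B : Matrix ι ι ℝ) [DecidableEq ι] {k : ℕ} (hk : 1 ≤ k) :
    mnorm (B ^ k) ≤ mnorm B ^ k := by
  induction k with
  | zero => omega
  | succ k ih =>
    rcases Nat.eq_or_lt_of_le hk with h | h
    · simp [← h]
    · have hk1 : 1 ≤ k := by omega
      calc mnorm (B ^ (k + 1)) = mnorm (B ^ k * B) := by rw [pow_succ]
        _ ≤ mnorm (B ^ k) * mnorm B := mnorm_mul_le _ _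
        _ ≤ mnorm B ^ k * mnorm B :=
            mul_le_mul_of_nonneg_right (ih hk1) (mnorm_nonneg _)
        _ = mnorm B ^ (k + 1) := (pow_succ _ _).symm

lemma specRad_lt_one [DecidableEq ι] {A B : Matrix ι ι ℝ} {c : ℝ}
    (hc0 : 0 < c) (hc1 : c < 1) (hA0 : ∀ i j, 0 ≤ A i j)
    (hAB : ∀ i j, A i j ≤ c * B i j) (hB : specRad B = 1) : specRad A < 1 := by
  have hB0 : ∀ i j, 0 ≤ B i j := fun i j =>
    nonneg_of_mul_nonneg_right (le_trans (hA0 i j) (hAB i j)) hc0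
  set f : ℕ → ℝ := fun k => (mnorm (A ^ k)) ^ ((k : ℝ)⁻¹) with hf
  set g : ℕ → ℝ := fun k => (mnorm (B ^ k)) ^ ((k : ℝ)⁻¹) with hg
  -- entrywise comparisons of powers
  have hkey : ∀ k : ℕ, mnorm (A ^ k) ≤ c ^ k * mnorm (B ^ k) := by
    intro k
    have h1 : ∀ i j, (A ^ k) i j ≤ ((c • B) ^ k) i j := fun i j =>
      (pow_entry_le hA0 (fun i j => by simpa using hAB i j) k i j).2
    have h2 : mnorm (A ^ k) ≤ mnorm ((c • B) ^ k) :=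
      mnorm_mono (fun i j => (pow_entry_le hA0 (fun i j => by simpa using hAB i j) k i j).1) h1
    have h3 : (c • B) ^ k = (c ^ k) • B ^ k := smul_pow c B k
    have h4 : mnorm ((c ^ k) • (B ^ k)) = c ^ k * mnorm (B ^ k) := by
      simp only [mnorm, Matrix.smul_apply, smul_eq_mul, abs_mul,
        abs_of_nonneg (pow_nonneg hc0.le k), Finset.mul_sum]
    rw [h3, h4] at h2
    exact h2
  -- g is bounded above
  have hgbdd : ∀ k, g k ≤ max 1 (mnorm B) := by
    intro k
    rcases Nat.eq_zero_or_pos k with rfl | hk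
    · simp [hg]
    · have h1 : mnorm (B ^ k) ≤ mnorm B ^ k := mnorm_pow_le B hk
      have h2 : g k ≤ (mnorm B ^ k) ^ ((k : ℝ)⁻¹) :=
        Real.rpow_le_rpow (mnorm_nonneg _) h1 (by positivity)
      rw [Real.pow_rpow_inv_natCast (mnorm_nonneg B) hk.ne'] at h2
      exact h2.trans (le_max_right _ _)
  have hgBddU : Filter.IsBoundedUnder (· ≤ ·) Filter.atTop g :=
    Filter.isBoundedUnder_of ⟨max 1 (mnorm B), hgbdd⟩
  -- choose L' with 1 < L' and c * L' < 1
  set L : ℝ := (1 + c⁻¹) / 2 with hL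
  have hcinv : 1 < c⁻¹ := (one_lt_inv_iff₀).2 ⟨hc0, hc1⟩
  have hL1 : 1 < L := by rw [hL]; linarith
  have hcL : c * L < 1 := by
    have : c * L = (c + 1) / 2 := by rw [hL, mul_div_assoc', mul_add, mul_inv_cancel₀ hc0.ne', mul_one]
    rw [this]; linarith
  have hglim : Filter.limsup g Filter.atTop < L := by
    have h : Filter.limsup g Filter.atTop = 1 := hB
    rw [h]; exact hL1
  have hev : ∀ᶠ k in Filter.atTop, g k < L := eventually_lt_of_limsup_lt hglim hgBddU
  -- eventually f k ≤ c * L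
  have hfev : ∀ᶠ k in Filter.atTop, f k ≤ c * L := by
    filter_upwards [hev, Filter.eventually_ge_atTop 1] with k hk hk1
    have h1 : f k ≤ (c ^ k * mnorm (B ^ k)) ^ ((k : ℝ)⁻¹) :=
      Real.rpow_le_rpow (mnorm_nonneg _) (hkey k) (by positivity)
    have h2 : (c ^ k * mnorm (B ^ k)) ^ ((k : ℝ)⁻¹)
        = (c ^ k) ^ ((k : ℝ)⁻¹) * g k :=
      Real.mul_rpow (pow_nonneg hc0.le k) (mnorm_nonneg _)
    rw [Real.pow_rpow_inv_natCast hc0.le (by omega)] at h2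
    calc f k ≤ c * g k := by rw [h2] at h1; exact h1
      _ ≤ c * L := mul_le_mul_of_nonneg_left hk.le hc0.le
  have hfcb : Filter.IsCoboundedUnder (· ≤ ·) Filter.atTop f :=
    Filter.isCoboundedUnder_le_of_le Filter.atTop
      (fun k => Real.rpow_nonneg (mnorm_nonneg _) _)
  calc specRad A = Filter.limsup f Filter.atTop := rfl
    _ ≤ c * L := Filter.limsup_le_of_le hfcb hfev
    _ < 1 := hcL


lemma specRad_F_lt_one {V E : Type} [Fintype V] [Fintype E] [Nonempty E] [DecidableEq E]
    (S : BoxLikeGIFS V E) (p : E → ℝ) (hp : ∀ e, 0 < p e)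
    {q x1 y1 x2 y2 : ℝ} (hx : x2 < x1) (hy : y2 < y1)
    (h2 : specRad (S.Fmat p q x2 y2) = 1) : specRad (S.Fmat p q x1 y1) < 1 := by
  set α : ℝ := Finset.univ.sup' Finset.univ_nonempty S.a with hα
  set β : ℝ := Finset.univ.sup' Finset.univ_nonempty S.b with hβ
  have hα1 : α < 1 := (Finset.sup'_lt_iff _).mpr fun e _ => (S.a_mem e).2
  have hβ1 : β < 1 := (Finset.sup'_lt_iff _).mpr fun e _ => (S.b_mem e).2
  obtain ⟨e0⟩ := ‹Nonempty E›
  have hα0 : 0 < α := lt_of_lt_of_le (S.a_mem e0).1 (Finset.le_sup' S.a (Finset.mem_univ e0))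
  have hβ0 : 0 < β := lt_of_lt_of_le (S.b_mem e0).1 (Finset.le_sup' S.b (Finset.mem_univ e0))
  set c : ℝ := α ^ (x1 - x2) * β ^ (y1 - y2) with hc
  have hc0 : 0 < c := mul_pos (Real.rpow_pos_of_pos hα0 _) (Real.rpow_pos_of_pos hβ0 _)
  have hc1 : c < 1 := by
    have h1 : α ^ (x1 - x2) < 1 := Real.rpow_lt_one hα0.le hα1 (sub_pos.2 hx)
    have h2 : β ^ (y1 - y2) < 1 := Real.rpow_lt_one hβ0.le hβ1 (sub_pos.2 hy)
    calc c < 1 * 1 := mul_lt_mul'' h1 h2 (Real.rpow_nonneg hα0.le _) (Real.rpow_nonneg hβ0.le _)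
      _ = 1 := one_mul 1
  have hA0 : ∀ i j, 0 ≤ S.Fmat p q x1 y1 i j := by
    intro i j
    simp only [BoxLikeGIFS.Fmat, FmatG]
    split
    · have := hp j; have := (S.a_mem j).1; have := (S.b_mem j).1; positivity
    · exact le_refl 0
  have hAB : ∀ i j, S.Fmat p q x1 y1 i j ≤ c * S.Fmat p q x2 y2 i j := by
    intro i j
    simp only [BoxLikeGIFS.Fmat, FmatG]
    split
    · have haj := (S.a_mem j).1
      have hbj := (S.b_mem j).1
      have e1 : S.a j ^ x1 = S.a j ^ (x1 - x2) * S.a j ^ x2 := by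
        rw [← Real.rpow_add haj]; ring_nf
      have e2 : S.b j ^ y1 = S.b j ^ (y1 - y2) * S.b j ^ y2 := by
        rw [← Real.rpow_add hbj]; ring_nf
      have h1 : S.a j ^ (x1 - x2) ≤ α ^ (x1 - x2) :=
        Real.rpow_le_rpow haj.le (Finset.le_sup' S.a (Finset.mem_univ j)) (sub_pos.2 hx).le
      have h2 : S.b j ^ (y1 - y2) ≤ β ^ (y1 - y2) :=
        Real.rpow_le_rpow hbj.le (Finset.le_sup' S.b (Finset.mem_univ j)) (sub_pos.2 hy).le
      have key : S.a j ^ (x1 - x2) * S.b j ^ (y1 - y2) ≤ c :=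
        mul_le_mul h1 h2 (Real.rpow_nonneg hbj.le _) (Real.rpow_nonneg hα0.le _)
      have hpos : 0 ≤ p j ^ q * (S.a j ^ x2 * S.b j ^ y2) := by
        have := hp j; positivity
      calc p j ^ q * S.a j ^ x1 * S.b j ^ y1
          = (S.a j ^ (x1 - x2) * S.b j ^ (y1 - y2)) * (p j ^ q * (S.a j ^ x2 * S.b j ^ y2)) := by
            rw [e1, e2]; ring
        _ ≤ c * (p j ^ q * (S.a j ^ x2 * S.b j ^ y2)) := mul_le_mul_of_nonneg_right key hpos
        _ = c * (p j ^ q * S.a j ^ x2 * S.b j ^ y2) := by ring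
    · simp
  exact specRad_lt_one hc0 hc1 hA0 hAB h2

end LqGIFS
end

open LqGIFS MeasureTheory Filter Set

/-- dichotomy.  All `T_e` diagonal and the system strongly connected:
for every `q ≥ 0` either `max{γ_A(q), γ_B(q)} ≤ t(q)` or `min{γ_A(q), γ_B(q)} ≥ t(q)`. -/
theorem statement10
    {V E : Type} [Fintype V] [Fintype E] [Nonempty V]
    (S : BoxLikeGIFS V E) (hSC : S.StronglyConnected)
    (hdiag : ∀ e : E, S.diag e = true)
    (p : E → ℝ) (hp : S.IsWeights p)
    (μ : V → Measure (ℝ × ℝ)) (hμ : S.IsGDMeasure p μ)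
    (τA τB : ℝ → ℝ)
    (hτA : ∀ q : ℝ, 0 ≤ q → ∀ v : V, HasLq1 ((μ v).map Prod.fst) q (τA q))
    (hτB : ∀ q : ℝ, 0 ≤ q → ∀ v : V, HasLq1 ((μ v).map Prod.snd) q (τB q))
    (γA γB : ℝ → ℝ)
    (hγA : ∀ q : ℝ, 0 ≤ q → specRad (S.Fmat p q (τA q) (γA q - τA q)) = 1)
    (hγB : ∀ q : ℝ, 0 ≤ q → specRad (S.Fmat p q (γB q - τB q) (τB q)) = 1) :
    ∀ q : ℝ, 0 ≤ q →
      (max (γA q) (γB q) ≤ τA q + τB q ∨ τA q + τB q ≤ min (γA q) (γB q)) := by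
  intro q hq
  by_contra hcon
  push_neg at hcon
  obtain ⟨h1, h2⟩ := hcon
  rw [lt_max_iff] at h1
  rw [min_lt_iff] at h2
  have hE : Nonempty E := ⟨(S.edge_exists (Classical.arbitrary V)).choose⟩
  rcases lt_or_ge (τA q + τB q) (γA q) with hA | hA
  · -- γA q > t, so γB q < t by h2
    have hB' : γB q < τA q + τB q := by rcases h2 with h | h <;> linarith
    have := specRad_F_lt_one S p hp.1 (x1 := τA q) (y1 := γA q - τA q)
      (x2 := γB q - τB q) (y2 := τB q) (by linarith) (by linarith) (hγB q hq)
    rw [hγA q hq] at this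
    exact lt_irrefl 1 this
  · -- γA q ≤ t; then from h1 we get γB q > t
    have hB' : τA q + τB q < γB q := by rcases h1 with h | h <;> linarith
    have hA' : γA q < τA q + τB q := by rcases h2 with h | h <;> linarith
    have := specRad_F_lt_one S p hp.1 (x1 := γB q - τB q) (y1 := τB q)
      (x2 := τA q) (y2 := γA q - τA q) (by linarith) (by linarith) (hγA q hq)
    rw [hγB q hq] at this
    exact lt_irrefl 1 this
end

section
/- Let (V,E) be a finite strongly connected directed graph with maps i,t:E→V, let a_e,b_e∈(0,1) and p_e>0 for e∈E, and fix q≥0. Then the function x↦y(x) (the unique real with ρ(F^{(q)}_{x,y(x)})=1) is continuous and decreasing on ℝ, and the function x↦f^{(q)}(x) is continuous on ℝ. -/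
open MeasureTheory Filter Set
open scoped Classical

open LqGIFS MeasureTheory Filter Set

namespace Statement12Aux


variable {V E : Type} [Fintype E]

lemma right_zero (ini ter : E → V) (hSC : LqGIFS.GraphSC ini ter)
    (c : E → ℝ) (hc : ∀ e, 0 < c e)
    (u : E → ℝ) (hu : ∀ e, 0 ≤ u e)
    (heq : ∀ e, ∑ e', (if ter e = ini e' then c e' else 0) * u e' = u e)
    (e₀ : E) (h0 : u e₀ = 0) : ∀ e, u e = 0 := by
  have step : ∀ e, u e = 0 → ∀ e', ter e = ini e' → u e' = 0 := by
    intro e he e' hee'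
    have hsum : ∑ e', (if ter e = ini e' then c e' else 0) * u e' = 0 := by rw [heq e, he]
    have hnn : ∀ i ∈ Finset.univ, 0 ≤ (if ter e = ini i then c i else 0) * u i := by
      intro i _
      by_cases h : ter e = ini i <;> simp [h, mul_nonneg (hc i).le (hu i), hu i]
    have hterm := (Finset.sum_eq_zero_iff_of_nonneg hnn).mp hsum e' (Finset.mem_univ _)
    rw [if_pos hee'] at hterm
    exact (mul_eq_zero.mp hterm).resolve_left (ne_of_gt (hc e'))
  have key : ∀ w, Relation.TransGen (fun s t : V => ∃ g, ini g = s ∧ ter g = t) (ter e₀) w →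
      ∀ e', ini e' = w → u e' = 0 := by
    intro w h
    induction h with
    | single hr =>
      obtain ⟨g, hg1, hg2⟩ := hr
      have hug : u g = 0 := step e₀ h0 g hg1.symm
      intro e' he'
      exact step g hug e' (by rw [hg2, he'])
    | tail _ hbc ih =>
      obtain ⟨g, hg1, hg2⟩ := hbc
      have hug : u g = 0 := ih g hg1
      intro e' he'
      exact step g hug e' (by rw [hg2, he'])
  intro e
  exact key (ini e) (hSC (ter e₀) (ini e)) e rfl

lemma left_zero (ini ter : E → V) (hSC : LqGIFS.GraphSC ini ter)
    (c : E → ℝ) (hc : ∀ e, 0 < c e)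
    (u : E → ℝ) (hu : ∀ e, 0 ≤ u e)
    (heq : ∀ e', ∑ e, u e * (if ter e = ini e' then c e' else 0) = u e')
    (e₀ : E) (h0 : u e₀ = 0) : ∀ e, u e = 0 := by
  have step : ∀ e', u e' = 0 → ∀ e, ter e = ini e' → u e = 0 := by
    intro e' he' e hee'
    have hsum : ∑ e, u e * (if ter e = ini e' then c e' else 0) = 0 := by rw [heq e', he']
    have hnn : ∀ i ∈ Finset.univ, 0 ≤ u i * (if ter i = ini e' then c e' else 0) := by
      intro i _
      by_cases h : ter i = ini e' <;> simp [h, mul_nonneg (hu i) (hc e').le, hu i]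
    have hterm := (Finset.sum_eq_zero_iff_of_nonneg hnn).mp hsum e (Finset.mem_univ _)
    rw [if_pos hee'] at hterm
    exact (mul_eq_zero.mp hterm).resolve_right (ne_of_gt (hc e'))
  have key : ∀ w, Relation.TransGen (fun s t : V => ∃ g, ini g = s ∧ ter g = t) w (ini e₀) →
      ∀ e, ter e = w → u e = 0 := by
    intro w h
    induction h using Relation.TransGen.head_induction_on with
    | single hr =>
      obtain ⟨g, hg1, hg2⟩ := hr
      have hug : u g = 0 := step e₀ h0 g hg2
      intro e he
      exact step g hug e (by rw [he, hg1])
    | head hr _ ihq =>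
      obtain ⟨g, hg1, hg2⟩ := hr
      have hug : u g = 0 := ihq g hg2
      intro e he
      exact step g hug e (by rw [he, hg1])
  intro e
  exact key (ter e) (hSC (ter e) (ini e₀)) e rfl

end Statement12Aux

namespace Statement12Aux

variable {V E : Type} [Fintype E]

lemma right_pos (ini ter : E → V) (hSC : LqGIFS.GraphSC ini ter)
    (c : E → ℝ) (hc : ∀ e, 0 < c e)
    (u : E → ℝ) (hu : ∀ e, 0 ≤ u e)
    (heq : ∀ e, ∑ e', (if ter e = ini e' then c e' else 0) * u e' = u e)
    (hnz : ∃ e, u e ≠ 0) : ∀ e, 0 < u e := by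
  intro e
  rcases (hu e).lt_or_eq with h | h
  · exact h
  · obtain ⟨e₁, he₁⟩ := hnz
    exact absurd (right_zero ini ter hSC c hc u hu heq e h.symm e₁) he₁

lemma left_pos (ini ter : E → V) (hSC : LqGIFS.GraphSC ini ter)
    (c : E → ℝ) (hc : ∀ e, 0 < c e)
    (u : E → ℝ) (hu : ∀ e, 0 ≤ u e)
    (heq : ∀ e', ∑ e, u e * (if ter e = ini e' then c e' else 0) = u e')
    (hnz : ∃ e, u e ≠ 0) : ∀ e, 0 < u e := by
  intro e
  rcases (hu e).lt_or_eq with h | h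
  · exact h
  · obtain ⟨e₁, he₁⟩ := hnz
    exact absurd (left_zero ini ter hSC c hc u hu heq e h.symm e₁) he₁

lemma right_unique [Nonempty E] (ini ter : E → V) (hSC : LqGIFS.GraphSC ini ter)
    (c : E → ℝ) (hc : ∀ e, 0 < c e)
    (u u' : E → ℝ) (hu : ∀ e, 0 < u e) (hu' : ∀ e, 0 < u' e)
    (heq : ∀ e, ∑ e', (if ter e = ini e' then c e' else 0) * u e' = u e)
    (heq' : ∀ e, ∑ e', (if ter e = ini e' then c e' else 0) * u' e' = u' e)
    (hsum : ∑ e, u e = 1) (hsum' : ∑ e, u' e = 1) : u = u' := by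
  obtain ⟨e₀, -, he₀⟩ := Finset.exists_mem_eq_inf' (Finset.univ_nonempty (α := E))
    (fun e => u' e / u e)
  have htle : ∀ e, u' e₀ / u e₀ ≤ u' e / u e := by
    intro e; rw [← he₀]; exact Finset.inf'_le _ (Finset.mem_univ e)
  set t := u' e₀ / u e₀ with ht
  have hw0 : ∀ e, 0 ≤ u' e - t * u e := by
    intro e
    have := (le_div_iff₀ (hu e)).mp (htle e)
    linarith
  have hweq : ∀ e, ∑ e', (if ter e = ini e' then c e' else 0) * (u' e' - t * u e')
      = u' e - t * u e := by
    intro e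
    have h : ∀ e', (if ter e = ini e' then c e' else 0) * (u' e' - t * u e')
        = (if ter e = ini e' then c e' else 0) * u' e'
          - t * ((if ter e = ini e' then c e' else 0) * u e') := by
      intro e'; ring
    rw [Finset.sum_congr rfl fun e' _ => h e', Finset.sum_sub_distrib,
      ← Finset.mul_sum, heq, heq']
  have hwe₀ : u' e₀ - t * u e₀ = 0 := by
    rw [ht, div_mul_cancel₀ _ (hu e₀).ne']; ring
  have hwz := right_zero ini ter hSC c hc _ hw0 hweq e₀ hwe₀
  have ht1 : t = 1 := by
    have h : ∑ e, u' e = ∑ e, t * u e :=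
      Finset.sum_congr rfl fun e _ => by have := hwz e; linarith
    rw [hsum', ← Finset.mul_sum, hsum, mul_one] at h
    exact h.symm
  funext e
  have := hwz e; rw [ht1] at this; linarith

lemma left_unique [Nonempty E] (ini ter : E → V) (hSC : LqGIFS.GraphSC ini ter)
    (c : E → ℝ) (hc : ∀ e, 0 < c e)
    (wt : E → ℝ) (hwt : ∀ e, 0 < wt e)
    (u u' : E → ℝ) (hu : ∀ e, 0 < u e) (hu' : ∀ e, 0 < u' e)
    (heq : ∀ e', ∑ e, u e * (if ter e = ini e' then c e' else 0) = u e')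
    (heq' : ∀ e', ∑ e, u' e * (if ter e = ini e' then c e' else 0) = u' e')
    (hsum : ∑ e, u e * wt e = 1) (hsum' : ∑ e, u' e * wt e = 1) : u = u' := by
  obtain ⟨e₀, -, he₀⟩ := Finset.exists_mem_eq_inf' (Finset.univ_nonempty (α := E))
    (fun e => u' e / u e)
  have htle : ∀ e, u' e₀ / u e₀ ≤ u' e / u e := by
    intro e; rw [← he₀]; exact Finset.inf'_le _ (Finset.mem_univ e)
  set t := u' e₀ / u e₀ with ht
  have hw0 : ∀ e, 0 ≤ u' e - t * u e := by
    intro e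
    have := (le_div_iff₀ (hu e)).mp (htle e)
    linarith
  have hweq : ∀ e', ∑ e, (u' e - t * u e) * (if ter e = ini e' then c e' else 0)
      = u' e' - t * u e' := by
    intro e'
    have h : ∀ e, (u' e - t * u e) * (if ter e = ini e' then c e' else 0)
        = u' e * (if ter e = ini e' then c e' else 0)
          - t * (u e * (if ter e = ini e' then c e' else 0)) := by
      intro e; ring
    rw [Finset.sum_congr rfl fun e _ => h e, Finset.sum_sub_distrib,
      ← Finset.mul_sum, heq, heq']
  have hwe₀ : u' e₀ - t * u e₀ = 0 := by
    rw [ht, div_mul_cancel₀ _ (hu e₀).ne']; ring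
  have hwz := left_zero ini ter hSC c hc _ hw0 hweq e₀ hwe₀
  have ht1 : t = 1 := by
    have h : ∑ e, u' e * wt e = ∑ e, t * (u e * wt e) := by
      refine Finset.sum_congr rfl fun e _ => ?_
      have h2 : u' e = t * u e := by have := hwz e; linarith
      rw [h2]; ring
    rw [hsum', ← Finset.mul_sum, hsum, mul_one] at h
    exact h.symm
  funext e
  have := hwz e; rw [ht1] at this; linarith

end Statement12Aux


/-- continuity of `y(x)` and of the Perron data `f^{(q)}`.  For a
finite strongly connected directed graph with `a_e, b_e ∈ (0,1)`, `p_e > 0` and `q ≥ 0`,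
if `Y x` is the unique real with `ρ(F^{(q)}_{x, Y x}) = 1` and `f x` is the associated
Perron vector data, then `Y` is continuous and decreasing and `f` is continuous. -/
theorem statement12
    {V E : Type} [Fintype V] [Fintype E]
    (ini ter : E → V)
    (hout : ∀ v : V, ∃ e : E, ini e = v)
    (hSC : GraphSC ini ter)
    (a b p : E → ℝ)
    (ha : ∀ e, a e ∈ Set.Ioo (0 : ℝ) 1) (hb : ∀ e, b e ∈ Set.Ioo (0 : ℝ) 1)
    (hp : ∀ e, 0 < p e)
    (q : ℝ) (hq : 0 ≤ q)
    (Y : ℝ → ℝ) (f : ℝ → E → ℝ)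
    (hPerron : ∀ x : ℝ, IsPerronData ini ter p a b q x (Y x) (f x)) :
    Continuous Y ∧ Antitone Y ∧ Continuous f := by
  classical
  rcases isEmpty_or_nonempty E with hE | hE
  · exfalso
    obtain ⟨-, u0, v0, -, -, h1, -⟩ := hPerron 0
    simp [Finset.univ_eq_empty] at h1
  obtain ⟨e₀⟩ := id hE
  choose hspec u v hu hv husum hue hve hvu hf using hPerron
  set c : ℝ → E → ℝ := fun x e => p e ^ q * a e ^ x * b e ^ (Y x) with hc_def
  have hcpos : ∀ x e, 0 < c x e := fun x e =>
    mul_pos (mul_pos (Real.rpow_pos_of_pos (hp e) q) (Real.rpow_pos_of_pos (ha e).1 x))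
      (Real.rpow_pos_of_pos (hb e).1 (Y x))
  have hueq : ∀ x e, ∑ e', (if ter e = ini e' then c x e' else 0) * u x e' = u x e := by
    intro x e
    have h := congrFun (hue x) e
    simp only [Matrix.mulVec, dotProduct, FmatG] at h
    simp only [hc_def]
    exact h
  have hveq : ∀ x e', ∑ e, v x e * (if ter e = ini e' then c x e' else 0) = v x e' := by
    intro x e'
    have h := congrFun (hve x) e'
    simp only [Matrix.vecMul, dotProduct, FmatG] at h
    simp only [hc_def]
    exact h
  have hform : ∀ (t s : ℝ) (e : E), a e ^ t * b e ^ s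
      = Real.exp (t * Real.log (a e) + s * Real.log (b e)) := by
    intro t s e
    rw [Real.rpow_def_of_pos (ha e).1, Real.rpow_def_of_pos (hb e).1, ← Real.exp_add]
    ring_nf
  have key : ∀ x x', ∃ e : E, x * Real.log (a e) + Y x * Real.log (b e)
      ≤ x' * Real.log (a e) + Y x' * Real.log (b e) := by
    intro x x'
    by_contra hcon
    push_neg at hcon
    have hclt : ∀ e, c x' e < c x e := by
      intro e
      have h1 : a e ^ x' * b e ^ (Y x') < a e ^ x * b e ^ (Y x) := by
        rw [hform, hform]
        exact Real.exp_lt_exp.mpr (hcon e)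
      have hpq : (0:ℝ) < p e ^ q := Real.rpow_pos_of_pos (hp e) q
      calc c x' e = p e ^ q * (a e ^ x' * b e ^ (Y x')) := by simp only [hc_def]; ring
        _ < p e ^ q * (a e ^ x * b e ^ (Y x)) := mul_lt_mul_of_pos_left h1 hpq
        _ = c x e := by simp only [hc_def]; ring
    obtain ⟨e₃, he₃⟩ := hout (ter e₀)
    have hle : ∀ e e' : E, v x' e * ((if ter e = ini e' then c x' e' else 0) * u x e')
        ≤ v x' e * ((if ter e = ini e' then c x e' else 0) * u x e') := by
      intro e e'
      by_cases h : ter e = ini e'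
      · rw [if_pos h, if_pos h]
        exact mul_le_mul_of_nonneg_left
          (mul_le_mul_of_nonneg_right (hclt e').le (hu x e').le) (hv x' e).le
      · rw [if_neg h, if_neg h]
    have hS1 : ∑ e, ∑ e', v x' e * ((if ter e = ini e' then c x e' else 0) * u x e')
        = ∑ e, v x' e * u x e := by
      refine Finset.sum_congr rfl fun e _ => ?_
      rw [← Finset.mul_sum, hueq x e]
    have hS2 : ∑ e, ∑ e', v x' e * ((if ter e = ini e' then c x' e' else 0) * u x e')
        = ∑ e, v x' e * u x e := by
      rw [Finset.sum_comm]
      refine Finset.sum_congr rfl fun e' _ => ?_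
      have h : ∀ e, v x' e * ((if ter e = ini e' then c x' e' else 0) * u x e')
          = (v x' e * (if ter e = ini e' then c x' e' else 0)) * u x e' := fun e => by ring
      rw [Finset.sum_congr rfl fun e _ => h e, ← Finset.sum_mul, hveq x' e']
    have hlt : ∑ e, ∑ e', v x' e * ((if ter e = ini e' then c x' e' else 0) * u x e')
        < ∑ e, ∑ e', v x' e * ((if ter e = ini e' then c x e' else 0) * u x e') := by
      refine Finset.sum_lt_sum (fun e _ => Finset.sum_le_sum fun e' _ => hle e e')
        ⟨e₀, Finset.mem_univ _, ?_⟩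
      refine Finset.sum_lt_sum (fun e' _ => hle e₀ e') ⟨e₃, Finset.mem_univ _, ?_⟩
      rw [if_pos he₃.symm, if_pos he₃.symm]
      exact mul_lt_mul_of_pos_left
        (mul_lt_mul_of_pos_right (hclt e₃) (hu x e₃)) (hv x' e₀)
    rw [hS1, hS2] at hlt
    exact lt_irrefl _ hlt
  have hr_pos : ∀ e : E, 0 < Real.log (a e) / Real.log (b e) := fun e =>
    div_pos_of_neg_of_neg (Real.log_neg (ha e).1 (ha e).2) (Real.log_neg (hb e).1 (hb e).2)
  have hratio : ∀ x x' (e : E), x * Real.log (a e) + Y x * Real.log (b e)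
      ≤ x' * Real.log (a e) + Y x' * Real.log (b e) →
      (x' - x) * (Real.log (a e) / Real.log (b e)) ≤ Y x - Y x' := by
    intro x x' e h
    have hlb : Real.log (b e) < 0 := Real.log_neg (hb e).1 (hb e).2
    rw [← mul_div_assoc, div_le_iff_of_neg hlb]
    linarith
  have hanti : Antitone Y := by
    intro x x' hxx'
    obtain ⟨e, he⟩ := key x x'
    have h1 := hratio x x' e he
    have h2 : 0 ≤ (x' - x) * (Real.log (a e) / Real.log (b e)) :=
      mul_nonneg (by linarith) (hr_pos e).le
    linarith
  set C := Finset.univ.sup' Finset.univ_nonempty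
    (fun e : E => Real.log (a e) / Real.log (b e)) with hC
  have hrC : ∀ e : E, Real.log (a e) / Real.log (b e) ≤ C := by
    intro e
    rw [hC]
    exact Finset.le_sup' (fun e : E => Real.log (a e) / Real.log (b e)) (Finset.mem_univ e)
  have hC0 : 0 < C := lt_of_lt_of_le (hr_pos e₀) (hrC e₀)
  have hlip : ∀ x x', |Y x - Y x'| ≤ C * |x' - x| := by
    intro x x'
    obtain ⟨e₁, h₁⟩ := key x x'
    obtain ⟨e₂, h₂⟩ := key x' x
    have hb₁ := hratio x x' e₁ h₁
    have hb₂ := hratio x' x e₂ h₂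
    have f1 : -|x' - x| * (Real.log (a e₁) / Real.log (b e₁))
        ≤ (x' - x) * (Real.log (a e₁) / Real.log (b e₁)) :=
      mul_le_mul_of_nonneg_right (neg_abs_le _) (hr_pos e₁).le
    have f2 : |x' - x| * (Real.log (a e₁) / Real.log (b e₁)) ≤ |x' - x| * C :=
      mul_le_mul_of_nonneg_left (hrC e₁) (abs_nonneg _)
    have f3 : (x' - x) * (Real.log (a e₂) / Real.log (b e₂))
        ≤ |x' - x| * (Real.log (a e₂) / Real.log (b e₂)) :=
      mul_le_mul_of_nonneg_right (le_abs_self _) (hr_pos e₂).le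
    have f4 : |x' - x| * (Real.log (a e₂) / Real.log (b e₂)) ≤ |x' - x| * C :=
      mul_le_mul_of_nonneg_left (hrC e₂) (abs_nonneg _)
    rw [abs_le]
    constructor
    · linarith
    · linarith
  have hYc : Continuous Y := by
    have hL : LipschitzWith ⟨C, hC0.le⟩ Y := by
      apply LipschitzWith.of_dist_le_mul
      intro x x'
      rw [Real.dist_eq, Real.dist_eq, abs_sub_comm x x']
      exact hlip x x'
    exact hL.continuous
  have hccont : ∀ e : E, Continuous fun z => c z e := by
    intro e
    have h1 : (fun z => c z e) = fun z =>
        p e ^ q * Real.exp (Real.log (a e) * z) * Real.exp (Real.log (b e) * Y z) := by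
      funext z
      simp only [hc_def]
      rw [Real.rpow_def_of_pos (ha e).1, Real.rpow_def_of_pos (hb e).1]
    rw [h1]
    exact (continuous_const.mul
      (Real.continuous_exp.comp (continuous_const.mul continuous_id))).mul
      (Real.continuous_exp.comp (continuous_const.mul hYc))
  have hucont : Continuous u := by
    apply SeqContinuous.continuous
    intro xs x hxs
    apply tendsto_of_subseq_tendsto
    intro ns hns
    have hmem : ∀ n, u (xs (ns n)) ∈ Set.pi Set.univ (fun _ : E => Set.Icc (0:ℝ) 1) := by
      intro n
      rw [Set.mem_univ_pi]
      intro e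
      refine ⟨(hu _ e).le, ?_⟩
      rw [← husum (xs (ns n))]
      exact Finset.single_le_sum (fun i _ => (hu _ i).le) (Finset.mem_univ e)
    obtain ⟨w, hwK, ms, hms, hwt⟩ :=
      (isCompact_univ_pi fun _ : E => isCompact_Icc).tendsto_subseq hmem
    refine ⟨ms, ?_⟩
    have hy : Tendsto (fun n => xs (ns (ms n))) atTop (nhds x) :=
      hxs.comp (hns.comp hms.tendsto_atTop)
    have hcoord : ∀ e, Tendsto (fun n => u (xs (ns (ms n))) e) atTop (nhds (w e)) :=
      fun e => tendsto_pi_nhds.mp hwt e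
    have hw0 : ∀ e, 0 ≤ w e := fun e => (Set.mem_univ_pi.mp hwK e).1
    have hwsum : ∑ e, w e = 1 := by
      have h1 : Tendsto (fun n => ∑ e, u (xs (ns (ms n))) e) atTop (nhds (∑ e, w e)) :=
        tendsto_finset_sum _ fun e _ => hcoord e
      have h2 : (fun n => ∑ e, u (xs (ns (ms n))) e) = fun _ => (1:ℝ) :=
        funext fun n => husum _
      rw [h2] at h1
      exact (tendsto_nhds_unique h1 tendsto_const_nhds)
    have hweq : ∀ e, ∑ e', (if ter e = ini e' then c x e' else 0) * w e' = w e := by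
      intro e
      have hL : Tendsto (fun n => ∑ e',
          (if ter e = ini e' then c (xs (ns (ms n))) e' else 0) * u (xs (ns (ms n))) e')
          atTop (nhds (∑ e', (if ter e = ini e' then c x e' else 0) * w e')) := by
        apply tendsto_finset_sum
        intro e' _
        by_cases h : ter e = ini e'
        · simp only [if_pos h]
          exact ((hccont e').continuousAt.tendsto.comp hy).mul (hcoord e')
        · simp only [if_neg h, zero_mul]
          exact tendsto_const_nhds
      have hR : (fun n => ∑ e',
          (if ter e = ini e' then c (xs (ns (ms n))) e' else 0) * u (xs (ns (ms n))) e')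
          = fun n => u (xs (ns (ms n))) e := funext fun n => hueq _ e
      rw [hR] at hL
      exact tendsto_nhds_unique hL (hcoord e)
    have hwnz : ∃ e, w e ≠ 0 := by
      by_contra hno
      push_neg at hno
      simp [hno] at hwsum
    have hwpos : ∀ e, 0 < w e :=
      Statement12Aux.right_pos ini ter hSC (c x) (hcpos x) w hw0 hweq hwnz
    have hident : w = u x :=
      Statement12Aux.right_unique ini ter hSC (c x) (hcpos x) w (u x) hwpos (hu x)
        hweq (hueq x) hwsum (husum x)
    rw [← hident]
    exact hwt
  have hsv : ∀ z, 0 < ∑ e, v z e := fun z =>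
    Finset.sum_pos (fun e _ => hv z e) Finset.univ_nonempty
  have hgen : ∀ z e', ∑ e, (v z e / (∑ e'', v z e'')) * (if ter e = ini e' then c z e' else 0)
      = v z e' / (∑ e'', v z e'') := by
    intro z e'
    have h : ∀ e, (v z e / (∑ e'', v z e'')) * (if ter e = ini e' then c z e' else 0)
        = (v z e * (if ter e = ini e' then c z e' else 0)) / (∑ e'', v z e'') :=
      fun e => by ring
    rw [Finset.sum_congr rfl fun e _ => h e, ← Finset.sum_div, hveq]
  have hgensum : ∀ z, ∑ e, v z e / (∑ e'', v z e'') = 1 := by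
    intro z
    rw [← Finset.sum_div, div_self (hsv z).ne']
  have hvcont : Continuous v := by
    apply SeqContinuous.continuous
    intro xs x hxs
    apply tendsto_of_subseq_tendsto
    intro ns hns
    have hmem : ∀ n, (fun e => v (xs (ns n)) e / (∑ e'', v (xs (ns n)) e''))
        ∈ Set.pi Set.univ (fun _ : E => Set.Icc (0:ℝ) 1) := by
      intro n
      rw [Set.mem_univ_pi]
      intro e
      constructor
      · exact div_nonneg (hv _ e).le (hsv _).le
      · rw [div_le_one (hsv _)]
        exact Finset.single_le_sum (fun i _ => (hv _ i).le) (Finset.mem_univ e)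
    obtain ⟨w, hwK, ms, hms, hwt⟩ :=
      (isCompact_univ_pi fun _ : E => isCompact_Icc).tendsto_subseq hmem
    refine ⟨ms, ?_⟩
    have hy : Tendsto (fun n => xs (ns (ms n))) atTop (nhds x) :=
      hxs.comp (hns.comp hms.tendsto_atTop)
    have hcoord : ∀ e, Tendsto
        (fun n => v (xs (ns (ms n))) e / (∑ e'', v (xs (ns (ms n))) e''))
        atTop (nhds (w e)) := fun e => tendsto_pi_nhds.mp hwt e
    have hw0 : ∀ e, 0 ≤ w e := fun e => (Set.mem_univ_pi.mp hwK e).1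
    have hwsum : ∑ e, w e = 1 := by
      have h1 : Tendsto (fun n => ∑ e, v (xs (ns (ms n))) e / (∑ e'', v (xs (ns (ms n))) e''))
          atTop (nhds (∑ e, w e)) := tendsto_finset_sum _ fun e _ => hcoord e
      have h2 : (fun n => ∑ e, v (xs (ns (ms n))) e / (∑ e'', v (xs (ns (ms n))) e''))
          = fun _ => (1:ℝ) := funext fun n => hgensum _
      rw [h2] at h1
      exact tendsto_nhds_unique h1 tendsto_const_nhds
    have hweq : ∀ e', ∑ e, w e * (if ter e = ini e' then c x e' else 0) = w e' := by
      intro e'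
      have hL : Tendsto (fun n => ∑ e,
          (v (xs (ns (ms n))) e / (∑ e'', v (xs (ns (ms n))) e''))
            * (if ter e = ini e' then c (xs (ns (ms n))) e' else 0))
          atTop (nhds (∑ e, w e * (if ter e = ini e' then c x e' else 0))) := by
        apply tendsto_finset_sum
        intro e _
        by_cases h : ter e = ini e'
        · simp only [if_pos h]
          exact (hcoord e).mul ((hccont e').continuousAt.tendsto.comp hy)
        · simp only [if_neg h, mul_zero]
          exact tendsto_const_nhds
      have hR : (fun n => ∑ e,
          (v (xs (ns (ms n))) e / (∑ e'', v (xs (ns (ms n))) e''))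
            * (if ter e = ini e' then c (xs (ns (ms n))) e' else 0))
          = fun n => v (xs (ns (ms n))) e' / (∑ e'', v (xs (ns (ms n))) e'') :=
        funext fun n => hgen _ e'
      rw [hR] at hL
      exact tendsto_nhds_unique hL (hcoord e')
    have hwnz : ∃ e, w e ≠ 0 := by
      by_contra hno
      push_neg at hno
      simp [hno] at hwsum
    have hwpos : ∀ e, 0 < w e :=
      Statement12Aux.left_pos ini ter hSC (c x) (hcpos x) w hw0 hweq hwnz
    have hident : w = fun e => v x e / (∑ e'', v x e'') := by
      apply Statement12Aux.left_unique ini ter hSC (c x) (hcpos x) (fun _ => (1:ℝ))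
        (fun _ => one_pos) w _ hwpos (fun e => div_pos (hv x e) (hsv x)) hweq (hgen x)
      · simpa using hwsum
      · simpa using hgensum x
    have hu_y : ∀ e, Tendsto (fun n => u (xs (ns (ms n))) e) atTop (nhds (u x e)) :=
      fun e => ((continuous_apply e).comp hucont).continuousAt.tendsto.comp hy
    have ht_n : Tendsto (fun n => ∑ e,
        (v (xs (ns (ms n))) e / (∑ e'', v (xs (ns (ms n))) e'')) * u (xs (ns (ms n))) e)
        atTop (nhds (∑ e, w e * u x e)) :=
      tendsto_finset_sum _ fun e _ => (hcoord e).mul (hu_y e)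
    have hlimval : ∑ e, w e * u x e = (∑ e', v x e')⁻¹ := by
      rw [hident]
      have h : ∀ e, (v x e / (∑ e'', v x e'')) * u x e
          = (v x e * u x e) / (∑ e'', v x e'') := fun e => by ring
      rw [Finset.sum_congr rfl fun e _ => h e, ← Finset.sum_div, hvu, one_div]
    have hlim_pos : 0 < ∑ e, w e * u x e :=
      Finset.sum_pos (fun e _ => mul_pos (hwpos e) (hu x e)) Finset.univ_nonempty
    have hsy_eq : ∀ n, (∑ e', v (xs (ns (ms n))) e')
        = (∑ e, (v (xs (ns (ms n))) e / (∑ e'', v (xs (ns (ms n))) e''))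
            * u (xs (ns (ms n))) e)⁻¹ := by
      intro n
      have h : ∀ e, (v (xs (ns (ms n))) e / (∑ e'', v (xs (ns (ms n))) e''))
          * u (xs (ns (ms n))) e
          = (v (xs (ns (ms n))) e * u (xs (ns (ms n))) e)
            / (∑ e'', v (xs (ns (ms n))) e'') := fun e => by ring
      rw [Finset.sum_congr rfl fun e _ => h e, ← Finset.sum_div, hvu, one_div, inv_inv]
    have hs_tendsto : Tendsto (fun n => ∑ e', v (xs (ns (ms n))) e') atTop
        (nhds (∑ e', v x e')) := by
      have h1 := ht_n.inv₀ hlim_pos.ne'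
      rw [hlimval, inv_inv] at h1
      have h2 : (fun n => (∑ e, (v (xs (ns (ms n))) e / (∑ e'', v (xs (ns (ms n))) e''))
          * u (xs (ns (ms n))) e)⁻¹) = fun n => ∑ e', v (xs (ns (ms n))) e' :=
        funext fun n => (hsy_eq n).symm
      rw [h2] at h1
      exact h1
    rw [tendsto_pi_nhds]
    intro e
    have hcomp : (fun n => v (xs (ns (ms n))) e)
        = fun n => (v (xs (ns (ms n))) e / (∑ e'', v (xs (ns (ms n))) e''))
            * (∑ e', v (xs (ns (ms n))) e') :=
      funext fun n => (div_mul_cancel₀ _ (hsv _).ne').symm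
    have hfinal := (hcoord e).mul hs_tendsto
    have hval : w e * (∑ e', v x e') = v x e := by
      rw [hident]
      exact div_mul_cancel₀ _ (hsv x).ne'
    rw [hval] at hfinal
    show Tendsto (fun n => v (xs (ns (ms n))) e) atTop (nhds (v x e))
    rw [hcomp]
    exact hfinal
  refine ⟨hYc, hanti, ?_⟩
  have hfeq : f = fun x e => v x e * u x e := funext fun x => funext fun e => hf x e
  rw [hfeq]
  exact continuous_pi fun e =>
    ((continuous_apply e).comp hvcont).mul ((continuous_apply e).comp hucont)
end

section
/- Let N≥1, let 0<a_i,b_i<1 and p_i>0 for 1≤i≤N with ∑_{i=1}^N p_i=1, and fix q≥0. Then for each x∈ℝ there is a unique y(x)∈ℝ with ∑_{i=1}^N p_i^q a_i^x b_i^{y(x)} = 1. The function y is twice differentiable with y'(x) = −(∑_{i=1}^N p_i^q a_i^x b_i^{y(x)} log a_i)/(∑_{i=1}^N p_i^q a_i^x b_i^{y(x)} log b_i) and y''(x) ≥ 0 for all x∈ℝ. -/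
open MeasureTheory Filter Set
open scoped Classical

open LqGIFS MeasureTheory Filter Set


section Statement13Aux

open Real Filter Topology

private lemma s13_term_pos {N : ℕ} {a b p : Fin N → ℝ} {q : ℝ}
    (ha : ∀ i, a i ∈ Set.Ioo (0:ℝ) 1) (hb : ∀ i, b i ∈ Set.Ioo (0:ℝ) 1)
    (hp : ∀ i, 0 < p i) (i : Fin N) (x y : ℝ) :
    0 < p i ^ q * a i ^ x * b i ^ y :=
  mul_pos (mul_pos (Real.rpow_pos_of_pos (hp i) q) (Real.rpow_pos_of_pos (ha i).1 x))
    (Real.rpow_pos_of_pos (hb i).1 y)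

private lemma s13_anti {N : ℕ} (hN : 1 ≤ N) {a b p : Fin N → ℝ} {q : ℝ}
    (ha : ∀ i, a i ∈ Set.Ioo (0:ℝ) 1) (hb : ∀ i, b i ∈ Set.Ioo (0:ℝ) 1)
    (hp : ∀ i, 0 < p i) (x : ℝ) :
    StrictAnti (fun y : ℝ => ∑ i, p i ^ q * a i ^ x * b i ^ y) := by
  intro y y' hlt
  refine Finset.sum_lt_sum_of_nonempty ⟨⟨0, hN⟩, Finset.mem_univ _⟩ fun i _ => ?_
  have h := Real.rpow_lt_rpow_of_exponent_gt (hb i).1 (hb i).2 hlt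
  exact mul_lt_mul_of_pos_left h
    (mul_pos (Real.rpow_pos_of_pos (hp i) q) (Real.rpow_pos_of_pos (ha i).1 x))

private lemma s13_cont_rpow {c : ℝ} (hc : 0 < c) : Continuous fun x : ℝ => c ^ x := by
  have h : (fun x : ℝ => c ^ x) = fun x => Real.exp (Real.log c * x) :=
    funext fun x => Real.rpow_def_of_pos hc x
  rw [h]
  exact Real.continuous_exp.comp (continuous_const.mul continuous_id)

private lemma s13_exu {N : ℕ} (hN : 1 ≤ N) {a b p : Fin N → ℝ} {q : ℝ}
    (ha : ∀ i, a i ∈ Set.Ioo (0:ℝ) 1) (hb : ∀ i, b i ∈ Set.Ioo (0:ℝ) 1)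
    (hp : ∀ i, 0 < p i) (x : ℝ) :
    ∃! y : ℝ, (∑ i, p i ^ q * a i ^ x * b i ^ y) = 1 := by
  have i0 : Fin N := ⟨0, hN⟩
  set f : ℝ → ℝ := fun y => ∑ i, p i ^ q * a i ^ x * b i ^ y with hfdef
  have hcont : Continuous f := by
    refine continuous_finset_sum _ fun i _ => ?_
    exact (continuous_const.mul continuous_const).mul (s13_cont_rpow (hb i).1)
  have hblog : ∀ i : Fin N, Real.log (b i) < 0 := fun i => Real.log_neg (hb i).1 (hb i).2
  have hbexp : ∀ i : Fin N, (fun y : ℝ => b i ^ y) = fun y => Real.exp (Real.log (b i) * y) :=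
    fun i => funext fun y => Real.rpow_def_of_pos (hb i).1 y
  -- tendsto atBot
  have h1 : Tendsto f atBot atTop := by
    have hC : 0 < p i0 ^ q * a i0 ^ x :=
      mul_pos (Real.rpow_pos_of_pos (hp i0) q) (Real.rpow_pos_of_pos (ha i0).1 x)
    have hlin : Tendsto (fun y : ℝ => Real.log (b i0) * y) atBot atTop :=
      tendsto_id.const_mul_atBot_of_neg (hblog i0)
    have hexp : Tendsto (fun y : ℝ => b i0 ^ y) atBot atTop := by
      rw [hbexp i0]
      exact Real.tendsto_exp_atTop.comp hlin
    have hterm : Tendsto (fun y : ℝ => p i0 ^ q * a i0 ^ x * b i0 ^ y) atBot atTop :=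
      hexp.const_mul_atTop hC
    refine tendsto_atTop_mono (fun y => ?_) hterm
    exact Finset.single_le_sum (fun i _ => (s13_term_pos ha hb hp i x y).le) (Finset.mem_univ i0)
  -- tendsto atTop
  have h2 : Tendsto f atTop (𝓝 0) := by
    have : Tendsto f atTop (𝓝 (∑ i : Fin N, (0:ℝ))) := by
      refine tendsto_finset_sum _ fun i _ => ?_
      have hlin : Tendsto (fun y : ℝ => Real.log (b i) * y) atTop atBot :=
        tendsto_id.const_mul_atTop_of_neg (hblog i)
      have hexp : Tendsto (fun y : ℝ => b i ^ y) atTop (𝓝 0) := by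
        rw [hbexp i]
        exact Real.tendsto_exp_atBot.comp hlin
      have := hexp.const_mul (p i ^ q * a i ^ x)
      simpa using this
    simpa using this
  obtain ⟨y₁, hy₁⟩ := (h1.eventually_ge_atTop 1).exists
  obtain ⟨y₂, hy₂⟩ := (h2.eventually_lt_const one_pos).exists
  have hanti := s13_anti (q := q) hN ha hb hp x
  have hle : y₁ ≤ y₂ := by
    by_contra hcon
    push_neg at hcon
    exact absurd (le_trans hy₁ (hanti.antitone hcon.le)) (not_le.2 hy₂)
  have hone : (1:ℝ) ∈ Set.Icc (f y₂) (f y₁) := ⟨hy₂.le, hy₁⟩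
  obtain ⟨y, _, hy⟩ := intermediate_value_Icc' hle hcont.continuousOn hone
  exact ⟨y, hy, fun y' hy' => hanti.injective (hy'.trans hy.symm)⟩

private lemma s13_contY {N : ℕ} (hN : 1 ≤ N) {a b p : Fin N → ℝ} {q : ℝ}
    (ha : ∀ i, a i ∈ Set.Ioo (0:ℝ) 1) (hb : ∀ i, b i ∈ Set.Ioo (0:ℝ) 1)
    (hp : ∀ i, 0 < p i) (Y : ℝ → ℝ)
    (hY : ∀ x : ℝ, (∑ i, p i ^ q * a i ^ x * b i ^ (Y x)) = 1) (x₀ : ℝ) :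
    ContinuousAt Y x₀ := by
  have hanti : ∀ x : ℝ, StrictAnti (fun y : ℝ => ∑ i, p i ^ q * a i ^ x * b i ^ y) :=
    s13_anti hN ha hb hp
  have hcx : ∀ y : ℝ, Continuous fun x : ℝ => ∑ i, p i ^ q * a i ^ x * b i ^ y := by
    intro y
    refine continuous_finset_sum _ fun i _ => ?_
    exact (continuous_const.mul (s13_cont_rpow (ha i).1)).mul continuous_const
  rw [Metric.continuousAt_iff]
  intro ε hε
  have hup : (∑ i, p i ^ q * a i ^ x₀ * b i ^ (Y x₀ + ε)) < 1 := by
    have := hanti x₀ (lt_add_of_pos_right (Y x₀) hε)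
    simpa [hY x₀] using this
  have hlo : 1 < (∑ i, p i ^ q * a i ^ x₀ * b i ^ (Y x₀ - ε)) := by
    have := hanti x₀ (sub_lt_self (Y x₀) hε)
    simpa [hY x₀] using this
  have hev1 : ∀ᶠ x in 𝓝 x₀, (∑ i, p i ^ q * a i ^ x * b i ^ (Y x₀ + ε)) < 1 :=
    ((hcx (Y x₀ + ε)).continuousAt).eventually_lt_const hup
  have hev2 : ∀ᶠ x in 𝓝 x₀, 1 < (∑ i, p i ^ q * a i ^ x * b i ^ (Y x₀ - ε)) :=
    ((hcx (Y x₀ - ε)).continuousAt).eventually_const_lt hlo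
  obtain ⟨δ, hδpos, hδ⟩ := Metric.eventually_nhds_iff.1 (hev1.and hev2)
  refine ⟨δ, hδpos, fun {x} hx => ?_⟩
  obtain ⟨hx1, hx2⟩ := hδ hx
  have hYlt : Y x < Y x₀ + ε := by
    by_contra hcon
    push_neg at hcon
    have := (hanti x).antitone hcon
    rw [hY x] at this
    exact absurd (lt_of_le_of_lt this hx1) (lt_irrefl _)
  have hYgt : Y x₀ - ε < Y x := by
    by_contra hcon
    push_neg at hcon
    have := (hanti x).antitone hcon
    rw [hY x] at this
    exact absurd (lt_of_lt_of_le hx2 this) (lt_irrefl _)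
  rw [Real.dist_eq, abs_lt]
  constructor <;> [linarith; linarith]

private lemma s13_Bneg {N : ℕ} (hN : 1 ≤ N) {a b p : Fin N → ℝ} {q : ℝ}
    (ha : ∀ i, a i ∈ Set.Ioo (0:ℝ) 1) (hb : ∀ i, b i ∈ Set.Ioo (0:ℝ) 1)
    (hp : ∀ i, 0 < p i) (x y : ℝ) :
    (∑ i, p i ^ q * a i ^ x * b i ^ y * Real.log (b i)) < 0 := by
  have : (∑ i, p i ^ q * a i ^ x * b i ^ y * Real.log (b i)) < ∑ _i : Fin N, (0:ℝ) := by
    refine Finset.sum_lt_sum_of_nonempty ⟨⟨0, hN⟩, Finset.mem_univ _⟩ fun i _ => ?_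
    exact mul_neg_of_pos_of_neg (s13_term_pos ha hb hp i x y)
      (Real.log_neg (hb i).1 (hb i).2)
  simpa using this

/-- The implicit differentiation step. -/
private lemma s13_deriv {N : ℕ} (hN : 1 ≤ N) {a b p : Fin N → ℝ} {q : ℝ}
    (ha : ∀ i, a i ∈ Set.Ioo (0:ℝ) 1) (hb : ∀ i, b i ∈ Set.Ioo (0:ℝ) 1)
    (hp : ∀ i, 0 < p i) (Y : ℝ → ℝ)
    (hY : ∀ x : ℝ, (∑ i, p i ^ q * a i ^ x * b i ^ (Y x)) = 1) (x₀ : ℝ) :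
    HasDerivAt Y
      (-((∑ i, p i ^ q * a i ^ x₀ * b i ^ (Y x₀) * Real.log (a i)) /
         (∑ i, p i ^ q * a i ^ x₀ * b i ^ (Y x₀) * Real.log (b i)))) x₀ := by
  set y₀ := Y x₀ with hy₀def
  set Av : ℝ := ∑ i, p i ^ q * a i ^ x₀ * b i ^ y₀ * Real.log (a i) with hAv
  set Bv : ℝ := ∑ i, p i ^ q * a i ^ x₀ * b i ^ y₀ * Real.log (b i) with hBv
  have hBneg : Bv < 0 := s13_Bneg hN ha hb hp x₀ y₀
  have hBne : Bv ≠ 0 := ne_of_lt hBneg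
  set Φ : ℝ × ℝ → ℝ × ℝ := fun z => (z.1, ∑ i, p i ^ q * a i ^ z.1 * b i ^ z.2) with hΦdef
  -- derivative of each term
  have hti : ∀ i : Fin N, HasStrictFDerivAt (fun z : ℝ × ℝ => p i ^ q * a i ^ z.1 * b i ^ z.2)
      ((p i ^ q * a i ^ x₀ * b i ^ y₀ * Real.log (a i)) • ContinuousLinearMap.fst ℝ ℝ ℝ
        + (p i ^ q * a i ^ x₀ * b i ^ y₀ * Real.log (b i)) • ContinuousLinearMap.snd ℝ ℝ ℝ)
      (x₀, y₀) := by
    intro i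
    have h1 : HasStrictFDerivAt (fun z : ℝ × ℝ => a i ^ z.1)
        ((a i ^ x₀ * Real.log (a i)) • ContinuousLinearMap.fst ℝ ℝ ℝ) (x₀, y₀) :=
      (Real.hasStrictDerivAt_const_rpow (ha i).1 x₀).comp_hasStrictFDerivAt (x₀, y₀)
        hasStrictFDerivAt_fst
    have h2 : HasStrictFDerivAt (fun z : ℝ × ℝ => b i ^ z.2)
        ((b i ^ y₀ * Real.log (b i)) • ContinuousLinearMap.snd ℝ ℝ ℝ) (x₀, y₀) :=
      (Real.hasStrictDerivAt_const_rpow (hb i).1 y₀).comp_hasStrictFDerivAt (x₀, y₀)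
        hasStrictFDerivAt_snd
    have h3 := (h1.const_mul (p i ^ q)).mul h2
    refine h3.congr_fderiv ?_
    ext z <;>
      simp [ContinuousLinearMap.smul_apply, smul_eq_mul] <;> ring
  have hFd := HasStrictFDerivAt.fun_sum (u := Finset.univ) (fun i _ => hti i)
  have hDeq : (∑ i : Fin N,
      ((p i ^ q * a i ^ x₀ * b i ^ y₀ * Real.log (a i)) • ContinuousLinearMap.fst ℝ ℝ ℝ
        + (p i ^ q * a i ^ x₀ * b i ^ y₀ * Real.log (b i)) • ContinuousLinearMap.snd ℝ ℝ ℝ))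
      = Av • ContinuousLinearMap.fst ℝ ℝ ℝ + Bv • ContinuousLinearMap.snd ℝ ℝ ℝ := by
    refine ContinuousLinearMap.ext fun z => ?_
    simp only [ContinuousLinearMap.sum_apply, ContinuousLinearMap.add_apply,
      ContinuousLinearMap.smul_apply, ContinuousLinearMap.coe_fst',
      ContinuousLinearMap.coe_snd', smul_eq_mul, hAv, hBv, Finset.sum_mul,
      ← Finset.sum_add_distrib]
  rw [hDeq] at hFd
  set L : ℝ × ℝ →L[ℝ] ℝ × ℝ := (ContinuousLinearMap.fst ℝ ℝ ℝ).prod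
    (Av • ContinuousLinearMap.fst ℝ ℝ ℝ + Bv • ContinuousLinearMap.snd ℝ ℝ ℝ) with hLdef
  set M : ℝ × ℝ →L[ℝ] ℝ × ℝ := (ContinuousLinearMap.fst ℝ ℝ ℝ).prod
    ((-(Av / Bv)) • ContinuousLinearMap.fst ℝ ℝ ℝ + Bv⁻¹ • ContinuousLinearMap.snd ℝ ℝ ℝ)
    with hMdef
  have h₁ : Function.LeftInverse M L := by
    intro z
    refine Prod.ext ?_ ?_ <;>
      simp [hLdef, hMdef, ContinuousLinearMap.prod_apply, smul_eq_mul]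
    field_simp
    ring
  have h₂ : Function.RightInverse M L := by
    intro z
    refine Prod.ext ?_ ?_ <;>
      simp [hLdef, hMdef, ContinuousLinearMap.prod_apply, smul_eq_mul]
    field_simp
    ring
  set equiv := ContinuousLinearEquiv.equivOfInverse L M h₁ h₂ with hEq
  have hΦ' : HasStrictFDerivAt Φ (equiv : ℝ × ℝ →L[ℝ] ℝ × ℝ) (x₀, y₀) :=
    hasStrictFDerivAt_fst.prodMk hFd
  have key := hΦ'.to_localInverse
  have hΦpt : Φ (x₀, y₀) = (x₀, 1) := by
    simp only [hΦdef]
    exact Prod.ext rfl (by simpa [hy₀def] using hY x₀)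
  rw [hΦpt] at key
  set g := hΦ'.localInverse Φ equiv (x₀, y₀) with hgdef
  have hι : HasDerivAt (fun x : ℝ => ((x, (1:ℝ)) : ℝ × ℝ)) ((1:ℝ), (0:ℝ)) x₀ :=
    (hasDerivAt_id x₀).prodMk (hasDerivAt_const x₀ 1)
  have hg1 : HasDerivAt (fun x : ℝ => g (x, 1)) (equiv.symm (1, 0)) x₀ :=
    by have := key.hasFDerivAt.comp_hasDerivAt x₀ hι; exact this
  have hg2 : HasDerivAt (fun x : ℝ => (g (x, 1)).2) ((equiv.symm (1, 0)).2) x₀ :=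
    (ContinuousLinearMap.snd ℝ ℝ ℝ).hasFDerivAt.comp_hasDerivAt x₀ hg1
  have hsymm : equiv.symm ((1:ℝ), (0:ℝ)) = ((1:ℝ), -(Av / Bv)) := by
    rw [ContinuousLinearEquiv.symm_apply_eq]
    refine Prod.ext ?_ ?_ <;>
      simp [hEq, ContinuousLinearEquiv.equivOfInverse_apply, hLdef,
        ContinuousLinearMap.prod_apply, smul_eq_mul]
    field_simp
    ring
  have hYc : Tendsto (fun x : ℝ => ((x, Y x) : ℝ × ℝ)) (𝓝 x₀) (𝓝 (x₀, y₀)) := by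
    have := (continuousAt_id.prodMk (s13_contY hN ha hb hp Y hY x₀)).tendsto
    simpa [hy₀def] using this
  have hev := hΦ'.eventually_left_inverse
  have hev2 : ∀ᶠ x in 𝓝 x₀, g (x, 1) = (x, Y x) := by
    filter_upwards [hYc.eventually hev] with x hx
    have hΦx : Φ (x, Y x) = (x, 1) := Prod.ext rfl (hY x)
    rw [← hΦx]
    exact hx
  have hYg : Y =ᶠ[𝓝 x₀] fun x => (g (x, 1)).2 := by
    filter_upwards [hev2] with x hx
    rw [hx]
  have hg3 : HasDerivAt (fun x : ℝ => (g (x, 1)).2) (-(Av / Bv)) x₀ := by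
    rw [hsymm] at hg2
    exact hg2
  exact hg3.congr_of_eventuallyEq hYg

end Statement13Aux

/-- the implicit function `y(x)` in the IFS case.  For each `x` there
is a unique `y(x)` with `∑ p_i^q a_i^x b_i^{y(x)} = 1`; the function is twice
differentiable with the stated first derivative, and its second derivative is
nonnegative. -/
theorem statement13
    (N : ℕ) (hN : 1 ≤ N)
    (a b p : Fin N → ℝ)
    (ha : ∀ i, a i ∈ Set.Ioo (0 : ℝ) 1) (hb : ∀ i, b i ∈ Set.Ioo (0 : ℝ) 1)
    (hp : ∀ i, 0 < p i) (hp1 : ∑ i, p i = 1)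
    (q : ℝ) (hq : 0 ≤ q) :
    (∀ x : ℝ, ∃! y : ℝ, (∑ i, p i ^ q * a i ^ x * b i ^ y) = 1) ∧
    ∀ Y : ℝ → ℝ, (∀ x : ℝ, (∑ i, p i ^ q * a i ^ x * b i ^ (Y x)) = 1) →
      ∃ Y' Y'' : ℝ → ℝ,
        (∀ x : ℝ, HasDerivAt Y (Y' x) x) ∧
        (∀ x : ℝ, HasDerivAt Y' (Y'' x) x) ∧
        (∀ x : ℝ, Y' x =
          -((∑ i, p i ^ q * a i ^ x * b i ^ (Y x) * Real.log (a i)) /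
            (∑ i, p i ^ q * a i ^ x * b i ^ (Y x) * Real.log (b i)))) ∧
        (∀ x : ℝ, 0 ≤ Y'' x) := by
  classical
  have hne : (Finset.univ : Finset (Fin N)).Nonempty := ⟨⟨0, hN⟩, Finset.mem_univ _⟩
  refine ⟨s13_exu hN ha hb hp, ?_⟩
  intro Y hY
  set A : ℝ → ℝ := fun x => ∑ i, p i ^ q * a i ^ x * b i ^ (Y x) * Real.log (a i) with hAdef
  set B : ℝ → ℝ := fun x => ∑ i, p i ^ q * a i ^ x * b i ^ (Y x) * Real.log (b i) with hBdef
  set Y' : ℝ → ℝ := fun x => -(A x / B x) with hY'def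
  set Sq : ℝ → ℝ := fun x =>
    ∑ i, p i ^ q * a i ^ x * b i ^ (Y x) * (Real.log (a i) + Y' x * Real.log (b i)) ^ 2
    with hSqdef
  set Y'' : ℝ → ℝ := fun x => -(Sq x / B x) with hY''def
  have hBneg : ∀ x, B x < 0 := fun x => s13_Bneg hN ha hb hp x (Y x)
  have hBne : ∀ x, B x ≠ 0 := fun x => ne_of_lt (hBneg x)
  have hYd : ∀ x : ℝ, HasDerivAt Y (Y' x) x := fun x => s13_deriv hN ha hb hp Y hY x
  refine ⟨Y', Y'', hYd, ?_, fun x => rfl, ?_⟩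
  · -- second derivative
    intro x
    -- derivative of each coefficient
    have hci : ∀ i : Fin N, HasDerivAt (fun t : ℝ => p i ^ q * a i ^ t * b i ^ (Y t))
        (p i ^ q * a i ^ x * b i ^ (Y x) * (Real.log (a i) + Real.log (b i) * Y' x)) x := by
      intro i
      have h1 : HasDerivAt (fun t : ℝ => a i ^ t) (a i ^ x * Real.log (a i)) x :=
        (Real.hasStrictDerivAt_const_rpow (ha i).1 x).hasDerivAt
      have h2 : HasDerivAt (fun t : ℝ => b i ^ (Y t))
          (b i ^ (Y x) * Real.log (b i) * Y' x) x := by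
        have := (Real.hasStrictDerivAt_const_rpow (hb i).1 (Y x)).hasDerivAt.comp x (hYd x)
        exact this
      have h3 := (h1.const_mul (p i ^ q)).mul h2
      have h4 : HasDerivAt (fun t : ℝ => p i ^ q * a i ^ t * b i ^ (Y t))
          (p i ^ q * (a i ^ x * Real.log (a i)) * b i ^ (Y x)
            + p i ^ q * a i ^ x * (b i ^ (Y x) * Real.log (b i) * Y' x)) x := by
        exact h3
      convert h4 using 1
      ring
    have hAd : HasDerivAt A
        (∑ i, p i ^ q * a i ^ x * b i ^ (Y x) * (Real.log (a i) + Real.log (b i) * Y' x)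
          * Real.log (a i)) x := by
      rw [hAdef]
      exact HasDerivAt.fun_sum fun i _ => (hci i).mul_const (Real.log (a i))
    have hBd : HasDerivAt B
        (∑ i, p i ^ q * a i ^ x * b i ^ (Y x) * (Real.log (a i) + Real.log (b i) * Y' x)
          * Real.log (b i)) x := by
      rw [hBdef]
      exact HasDerivAt.fun_sum fun i _ => (hci i).mul_const (Real.log (b i))
    set A' : ℝ := ∑ i, p i ^ q * a i ^ x * b i ^ (Y x)
      * (Real.log (a i) + Real.log (b i) * Y' x) * Real.log (a i) with hA'
    set B' : ℝ := ∑ i, p i ^ q * a i ^ x * b i ^ (Y x)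
      * (Real.log (a i) + Real.log (b i) * Y' x) * Real.log (b i) with hB'
    have hq1 : HasDerivAt Y' (-((A' * B x - A x * B') / B x ^ 2)) x := (hAd.div hBd (hBne x)).neg
    have hkey : A' + Y' x * B' = Sq x := by
      rw [hA', hB', hSqdef, Finset.mul_sum, ← Finset.sum_add_distrib]
      exact Finset.sum_congr rfl fun i _ => by ring
    have hAeq : A x = -(Y' x) * B x := by
      have h : Y' x = -(A x / B x) := rfl
      rw [h, neg_neg, div_mul_cancel₀ _ (hBne x)]
    have hval : -((A' * B x - A x * B') / B x ^ 2) = Y'' x := by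
      rw [hY''def]
      have hnum : A' * B x - A x * B' = B x * Sq x := by
        rw [hAeq, ← hkey]
        ring
      rw [hnum, sq, mul_div_mul_left _ _ (hBne x)]
    rw [hval] at hq1
    exact hq1
  · intro x
    have hSqnn : 0 ≤ Sq x := by
      refine Finset.sum_nonneg fun i _ => ?_
      exact mul_nonneg (s13_term_pos ha hb hp i x (Y x)).le (sq_nonneg _)
    have : 0 ≤ Sq x / (-B x) := div_nonneg hSqnn (by linarith [hBneg x])
    rw [hY''def]
    simpa [div_neg] using this
end
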